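/- arXiv:2411.05654 — 2 statements merged into one kernel-verified Lean document; each statement's English description precedes it below -/
import Mathlib

section
/- For natural numbers m, k, v, the rational function Φ_{m,k,v}(y, z) = Σ_{t=0}^{m} C(m,t) C(m, k-t) · [P(y, v+m)/P(y, v+t)] · [P(z, v+m+t)/P(z, v+k)] is symmetric in y and z: Φ_{m,k,v}(y, z) = Φ_{m,k,v}(z, y). -/
open Finset

/-- Generalized binomial coefficient C(α, n) = α(α-1)⋯(α-n+1)/n!. -/
noncomputable def gchoose {K : Type*} [Field K] (α : K) (n : ℕ) : K :=
  (∏ i ∈ Finset.range n, (α - i)) / (n.factorial : K)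

/-- Rising factorial (a)↑_c = a(a+1)⋯(a+c-1). -/
def asc {R : Type*} [CommRing R] (a : R) (c : ℕ) : R :=
  ∏ i ∈ Finset.range c, (a + i)

/-- Falling factorial (a)↓_c = a(a-1)⋯(a-c+1). -/
def desc {R : Type*} [CommRing R] (a : R) (c : ℕ) : R :=
  ∏ i ∈ Finset.range c, (a - i)

/-- P(a,b) = (a+b)(a+b-1)⋯(a-b), a product of 2b+1 consecutive terms. -/
def PP {R : Type*} [CommRing R] (a : R) (b : ℕ) : R :=
  ∏ j ∈ Finset.range (2*b+1), (a + (b : R) - j)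

/-- The polynomial ∏_{j=lo}^{hi} (y² - (v+j)²), i.e. P(y, v+hi)/P(y, v+lo-1). -/
def Pratio {R : Type*} [CommRing R] (y : R) (v lo hi : ℕ) : R :=
  ∏ j ∈ Finset.Icc lo hi, (y^2 - ((v + j : ℕ) : R)^2)

/-- h_{1,m,u}(x;y). -/
noncomputable def h1 {R : Type*} [CommRing R] [Algebra ℚ R] (m u : ℕ) (x y : R) : R :=
  ∑ s ∈ Finset.range (m+1),
    algebraMap ℚ R ((-1)^s * (m.choose s : ℚ) / gchoose ((m : ℚ) + u + s + 1/2) (m+1))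
      * PP x (m + u + s) * Pratio y u (s+1) m

/-- h_{ℓ,m,u}(x; y₁,…,y_ℓ). -/
noncomputable def hgen {R : Type*} [CommRing R] [Algebra ℚ R] (ℓ m u : ℕ)
    (x : R) (y : Fin ℓ → R) : R :=
  ∑ s ∈ Fintype.piFinset (fun _ : Fin ℓ => Finset.range (m+1)),
    (fun S : ℕ → ℕ =>
      algebraMap ℚ R ((-1)^(S ℓ) / gchoose ((m : ℚ) + u + S ℓ + 1/2) (m+1))
        * PP x (m + u + S ℓ)
        * ∏ i : Fin ℓ,
            (algebraMap ℚ R (m.choose (s i) : ℚ)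
              * Pratio (y i) u (S ((i : ℕ) + 1) + 1) (m + S (i : ℕ))))
    (fun k => ∑ i ∈ Finset.univ.filter (fun i : Fin ℓ => (i : ℕ) < k), s i)

/-- Φ_{m,k,v}(y,z), with the convention that C(m, k-t) = 0 when t > k. -/
def Phi {R : Type*} [CommRing R] (m k v : ℕ) (y z : R) : R :=
  ∑ t ∈ Finset.range (m+1),
    ((m.choose t : R) * (if t ≤ k then (m.choose (k - t) : R) else 0))
      * Pratio y v (t+1) m * Pratio z v (k+1) (m+t)

lemma Pratio_empty (y : ℚ) (v lo hi : ℕ) (h : hi < lo) : Pratio y v lo hi = 1 := by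
  rw [Pratio, Finset.Icc_eq_empty (by omega), Finset.prod_empty]

lemma Pratio_peel_bot (y : ℚ) (v lo hi : ℕ) (h : lo ≤ hi) :
    Pratio y v lo hi = (y^2 - ((v+lo : ℕ) : ℚ)^2) * Pratio y v (lo+1) hi := by
  rw [Pratio, Pratio, Finset.Icc_add_one_left_eq_Ioc, Finset.Icc_eq_cons_Ioc h, Finset.prod_cons]

lemma Pratio_peel_top (y : ℚ) (v lo hi : ℕ) (h : lo ≤ hi + 1) :
    Pratio y v lo (hi+1) = Pratio y v lo hi * (y^2 - ((v+(hi+1) : ℕ) : ℚ)^2) := by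
  rw [Pratio, Pratio, Finset.prod_Icc_succ_top h]

lemma Pratio_eq (y : ℚ) (v lo hi : ℕ) :
    Pratio y v lo hi = ∏ j ∈ Finset.Icc (v+lo) (v+hi), (y^2 - (j : ℚ)^2) := by
  rw [← Finset.map_add_left_Icc, Finset.prod_map, Pratio]
  simp [addLeftEmbedding_apply]

lemma Pratio_shift (y : ℚ) (v lo hi : ℕ) :
    Pratio y (v+1) lo hi = Pratio y v (lo+1) (hi+1) := by
  rw [Pratio_eq, Pratio_eq, show v+1+lo = v+(lo+1) from by omega,
    show v+1+hi = v+(hi+1) from by omega]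

def cc (m k t : ℕ) : ℚ := (m.choose t : ℚ) * (if t ≤ k then (m.choose (k - t) : ℚ) else 0)

def wq (m k v : ℕ) : ℕ → ℚ
  | 0 => 0
  | (t+1) => -(cc m k t) * ((m:ℚ) - t) * (2*v+m+t+2)

lemma cc_of_le (m k t : ℕ) (h : t ≤ k) :
    cc m k t = (m.choose t : ℚ) * (m.choose (k-t) : ℚ) := by rw [cc, if_pos h]

lemma cc_of_gt (m k t : ℕ) (h : k < t) : cc m k t = 0 := by
  rw [cc, if_neg (by omega), mul_zero]

lemma cc_eq_zero (m k t : ℕ) (h : m + t < k) : cc m k t = 0 := by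
  have e : m.choose (k-t) = 0 := Nat.choose_eq_zero_of_lt (by omega)
  rw [cc_of_le m k t (by omega), e, Nat.cast_zero, mul_zero]

lemma choose_cast (m k : ℕ) (h : k ≤ m) :
    (m.choose (k+1) : ℚ) * (k+1) = (m.choose k : ℚ) * ((m:ℚ) - k) := by
  have h1 := congrArg (fun n : ℕ => (n : ℚ)) (Nat.choose_succ_right_eq m k)
  simp only [Nat.cast_mul] at h1
  rw [Nat.cast_sub h] at h1
  push_cast at h1 ⊢
  linarith [h1]

lemma hI2 (m k v t : ℕ) :
    wq m k v (t+1) = cc m k t * (((v:ℚ)+t+1)^2 - ((v:ℚ)+m+1)^2) := by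
  show -(cc m k t) * ((m:ℚ) - t) * (2*v+m+t+2) = _
  ring

lemma hI1 (m k v t : ℕ) (ht : t ≤ m) :
    ((k:ℚ)+1)*(2*v+k+m+2) * cc m (k+1) t + wq m k v t
      = cc m k t * (((v:ℚ)+m+t+1)^2 - ((v:ℚ)+k+1)^2) := by
  match t with
  | 0 =>
    show _ + 0 = _
    rw [cc_of_le m (k+1) 0 (by omega), cc_of_le m k 0 (by omega)]
    simp only [Nat.choose_zero_right, Nat.sub_zero, Nat.cast_one, one_mul]
    rcases le_or_gt k m with hk | hk
    · have hc := choose_cast m k hk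
      push_cast
      linear_combination (2*(v:ℚ)+k+m+2) * hc
    · rw [Nat.choose_eq_zero_of_lt hk, Nat.choose_eq_zero_of_lt (by omega : m < k+1)]
      simp
  | (t+1) =>
    show _ + (-(cc m k t) * ((m:ℚ) - t) * (2*v+m+t+2)) = _
    rcases lt_trichotomy t k with h | h | h
    · -- t < k
      obtain ⟨u, rfl⟩ : ∃ u, k = t+1+u := ⟨k - (t+1), by omega⟩
      rw [cc_of_le m (t+1+u+1) (t+1) (by omega), cc_of_le m (t+1+u) t (by omega),
        cc_of_le m (t+1+u) (t+1) (by omega),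
        show t+1+u+1 - (t+1) = u+1 from by omega, show t+1+u - t = u+1 from by omega,
        show t+1+u - (t+1) = u from by omega]
      rcases lt_trichotomy u m with hu | hu | hu
      · have h1c := choose_cast m u (by omega)
        have h2c := choose_cast m t (by omega)
        push_cast
        linear_combination ((2*(v:ℚ)+m+t+2) * (m.choose (u+1) : ℚ)) * h2c +
          ((2*(v:ℚ)+2*t+m+u+4) * (m.choose (t+1) : ℚ)) * h1c
      · have e1 : m.choose (u+1) = 0 := Nat.choose_eq_zero_of_lt (by omega)
        rw [e1]
        subst hu
        push_cast
        ring
      · have e1 : m.choose (u+1) = 0 := Nat.choose_eq_zero_of_lt (by omega)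
        have e2 : m.choose u = 0 := Nat.choose_eq_zero_of_lt (by omega)
        rw [e1, e2]
        push_cast
        ring
    · -- t = k
      subst h
      rw [cc_of_le m (t+1) (t+1) (by omega), cc_of_le m t t (by omega),
        cc_of_gt m t (t+1) (by omega)]
      simp only [Nat.sub_self]
      simp only [Nat.choose_zero_right, Nat.cast_one, mul_one, mul_zero]
      have hc := choose_cast m t (by omega)
      push_cast
      linear_combination (2*(v:ℚ)+t+m+2) * hc
    · -- k < t
      rw [cc_of_gt m (k+1) (t+1) (by omega), cc_of_gt m k t (by omega),
        cc_of_gt m k (t+1) (by omega)]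
      ring

lemma Phi_eq (m k v : ℕ) (y z : ℚ) :
    Phi m k v y z = ∑ t ∈ Finset.range (m+1),
      cc m k t * Pratio y v (t+1) m * Pratio z v (k+1) (m+t) := rfl

lemma add11 (a : ℕ) : a+1+1 = a+2 := rfl

lemma perterm (m k v : ℕ) (y z : ℚ) (t : ℕ) (ht : t ≤ m) :
    cc m k t * Pratio y (v+1) (t+1) m * Pratio z (v+1) (k+1) (m+t)
      - cc m k t * Pratio y v (t+1) m * Pratio z v (k+1) (m+t)
      + ((k:ℚ)+1)*(2*(v:ℚ)+k+m+2) * (cc m (k+1) t * Pratio y v (t+1) m * Pratio z v (k+1+1) (m+t))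
    = wq m k v (t+1) * Pratio y v (t+1+1) m * Pratio z v (k+2) (m+(t+1))
      - wq m k v t * Pratio y v (t+1) m * Pratio z v (k+2) (m+t) := by
  rw [Pratio_shift y v, Pratio_shift z v]
  simp only [← Nat.add_assoc, add11]
  rcases lt_trichotomy (m+t) k with hA | hB | hC
  · -- m + t < k : everything vanishes
    have h0 : cc m k t = 0 := cc_eq_zero _ _ _ hA
    have h1 : cc m (k+1) t = 0 := cc_eq_zero _ _ _ (by omega)
    have h2 : wq m k v (t+1) = 0 := by rw [hI2, h0, zero_mul]
    have h3 : wq m k v t = 0 := by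
      cases t with
      | zero => rfl
      | succ s =>
        rw [hI2]
        rw [cc_eq_zero m k s (by omega), zero_mul]
    rw [h0, h1, h2, h3]; ring
  · -- m + t = k
    subst hB
    have e1 : Pratio z v (m+t+2) (m+t+1) = 1 := Pratio_empty _ _ _ _ (by omega)
    have e3 : Pratio z v (m+t+2) (m+t) = 1 := Pratio_empty _ _ _ _ (by omega)
    have h1 : cc m (m+t+1) t = 0 := cc_eq_zero _ _ _ (by omega)
    have h3 : wq m (m+t) v t = 0 := by
      cases t with
      | zero => rfl
      | succ s =>
        rw [hI2]
        rw [cc_eq_zero m (m+(s+1)) s (by omega), zero_mul]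
    have hw := hI2 m (m+t) v t
    rcases eq_or_lt_of_le ht with rfl | htm
    · -- t = m
      have e2 : Pratio z v (t+t+1) (t+t) = 1 := Pratio_empty _ _ _ _ (by omega)
      have e4 : Pratio y v (t+2) (t+1) = 1 := Pratio_empty _ _ _ _ (by omega)
      have e5 : Pratio y v (t+1) t = 1 := Pratio_empty _ _ _ _ (by omega)
      rw [e1, e2, e3, e4, e5, h1, h3, hw]
      push_cast
      ring
    · have e2 : Pratio z v (m+t+1) (m+t) = 1 := Pratio_empty _ _ _ _ (by omega)
      have py1 : Pratio y v (t+2) (m+1) = Pratio y v (t+2) m * (y^2 - ((v+(m+1) : ℕ) : ℚ)^2) :=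
        Pratio_peel_top _ _ _ _ (by omega)
      have py2 : Pratio y v (t+1) m = (y^2 - ((v+(t+1) : ℕ) : ℚ)^2) * Pratio y v (t+2) m :=
        Pratio_peel_bot _ _ _ _ (by omega)
      rw [e1, e2, e3, h1, h3, hw, py1, py2]
      push_cast
      ring
  · -- k < m + t
    have hi1 := hI1 m k v t ht
    have hi2 := hI2 m k v t
    have pz1 : Pratio z v (k+2) (m+t+1) = Pratio z v (k+2) (m+t) * (z^2 - ((v+(m+t+1) : ℕ) : ℚ)^2) :=
      Pratio_peel_top _ _ _ _ (by omega)
    have pz2 : Pratio z v (k+1) (m+t) = (z^2 - ((v+(k+1) : ℕ) : ℚ)^2) * Pratio z v (k+2) (m+t) :=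
      Pratio_peel_bot _ _ _ _ (by omega)
    rcases eq_or_lt_of_le ht with rfl | htm
    · -- t = m
      have e4 : Pratio y v (t+2) (t+1) = 1 := Pratio_empty _ _ _ _ (by omega)
      have e5 : Pratio y v (t+1) t = 1 := Pratio_empty _ _ _ _ (by omega)
      rw [e4, e5, pz1, pz2, hi2]
      push_cast at hi1 ⊢
      linear_combination (Pratio z v (k+2) (t+t)) * hi1
    · have py1 : Pratio y v (t+2) (m+1) = Pratio y v (t+2) m * (y^2 - ((v+(m+1) : ℕ) : ℚ)^2) :=
        Pratio_peel_top _ _ _ _ (by omega)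
      have py2 : Pratio y v (t+1) m = (y^2 - ((v+(t+1) : ℕ) : ℚ)^2) * Pratio y v (t+2) m :=
        Pratio_peel_bot _ _ _ _ (by omega)
      rw [py1, py2, pz1, pz2, hi2]
      push_cast at hi1 ⊢
      linear_combination ((y^2 - ((v:ℚ)+t+1)^2) * Pratio y v (t+2) m * Pratio z v (k+2) (m+t)) * hi1

lemma recur (m k v : ℕ) (y z : ℚ) :
    Phi m k (v+1) y z - Phi m k v y z
      + ((k:ℚ)+1)*(2*(v:ℚ)+k+m+2) * Phi m (k+1) v y z = 0 := by
  rw [Phi_eq, Phi_eq, Phi_eq, Finset.mul_sum, ← Finset.sum_sub_distrib, ← Finset.sum_add_distrib]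
  rw [Finset.sum_congr rfl (fun t htm => perterm m k v y z t (by
    simp only [Finset.mem_range] at htm; omega))]
  rw [Finset.sum_range_sub (fun s => wq m k v s * Pratio y v (s+1) m * Pratio z v (k+2) (m+s))]
  have h1 : wq m k v (m+1) = 0 := by
    show -(cc m k m) * ((m:ℚ) - m) * _ = 0
    ring
  have h2 : wq m k v 0 = 0 := rfl
  rw [h1, h2]
  ring

lemma Phi_zero (m v : ℕ) (y z : ℚ) : Phi m 0 v y z = Pratio y v 1 m * Pratio z v 1 m := by
  rw [Phi_eq, Finset.sum_eq_single 0]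
  · simp [cc]
  · intro b _ hb
    rw [cc_of_gt m 0 b (Nat.pos_of_ne_zero hb)]
    ring
  · intro h
    exact absurd (Finset.mem_range.2 (by omega)) h


/-- Φ_{m,k,v} is symmetric in y and z. -/
theorem statement8 (m k v : ℕ) (y z : ℚ) :
    Phi m k v y z = Phi m k v z y := by
  induction k generalizing v with
  | zero => rw [Phi_zero, Phi_zero]; ring
  | succ k ih =>
    have h1 := recur m k v y z
    have h2 := recur m k v z y
    have hv := ih v
    have hv1 := ih (v+1)
    have hne : ((k:ℚ)+1)*(2*(v:ℚ)+k+m+2) ≠ 0 := by positivity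
    apply mul_left_cancel₀ hne
    linear_combination h1 - h2 + hv - hv1
end

section
/- For m, u natural numbers with u ≥ 1 and any rational k, the closed-form evaluation h_{1,m,u}(-k - 1/2; -m + k + 1/2) = -P(-m+k+1/2, u+m) · (m+1)(2m)! · (k)↓_m · (u+k+3/2)↑_m / (u+1/2)↑_{2m+1} holds, provided P(-m+k+1/2, u+s) ≠ 0 for 0 ≤ s ≤ m (which holds for all rational k since the arguments are half-integers shifted by k). -/
open Finset

section basics
variable (a : ℚ) (c : ℕ)
lemma asc_succ : asc a (c+1) = asc a c * (a + c) := by simp [asc, prod_range_succ]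
lemma desc_succ : desc a (c+1) = desc a c * (a - c) := by simp [desc, prod_range_succ]
lemma asc_succ' : asc a (c+1) = a * asc (a+1) c := by
  induction c with
  | zero => simp [asc]
  | succ n ih => rw [asc_succ, ih, asc_succ]; push_cast; ring
lemma desc_succ' : desc a (c+1) = a * desc (a-1) c := by
  induction c with
  | zero => simp [desc]
  | succ n ih => rw [desc_succ, ih, desc_succ]; push_cast; ring
lemma asc_add (b : ℕ) : asc a (b+c) = asc a b * asc (a+b) c := by
  induction c with
  | zero => simp [asc]
  | succ n ih => rw [show b+(n+1) = (b+n)+1 from rfl, asc_succ, ih, asc_succ]; push_cast; ring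
lemma desc_add (b : ℕ) : desc a (b+c) = desc a b * desc (a-b) c := by
  induction c with
  | zero => simp [desc]
  | succ n ih => rw [show b+(n+1) = (b+n)+1 from rfl, desc_succ, ih, desc_succ]; push_cast; ring
lemma desc_eq_asc : desc a c = asc (a - c + 1) c := by
  induction c generalizing a with
  | zero => simp [asc, desc]
  | succ n ih =>
    rw [desc_succ, ih, asc_succ']
    have h2 : a - ((n:ℚ)+1) + 1 + 1 = a - n + 1 := by push_cast; ring
    push_cast
    rw [h2]
    ring
lemma asc_pos (ha : 0 < a) : 0 < asc a c := prod_pos fun i _ => by positivity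
lemma desc_pos (h : 0 < a - c + 1) : 0 < desc a c := by
  refine prod_pos fun i hi => ?_
  have : (i : ℚ) + 1 ≤ c := by exact_mod_cast Nat.succ_le_of_lt (mem_range.mp hi)
  linarith
lemma PP_eq_desc (b : ℕ) : PP a b = desc (a + (b:ℚ)) (2*b+1) := rfl
lemma PP_succ (b : ℕ) : PP a (b+1) = PP a b * ((a + ((b:ℚ)+1)) * (a - ((b:ℚ)+1))) := by
  rw [PP_eq_desc, PP_eq_desc, show 2*(b+1)+1 = ((2*b+1)+1)+1 from by ring, desc_succ, desc_succ']
  rw [show a + ((b+1:ℕ):ℚ) - 1 = a + (b:ℚ) from by push_cast; ring]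
  push_cast; ring
lemma PP_neg (b : ℕ) : PP (-a) b = - PP a b := by
  induction b with
  | zero => simp [PP]
  | succ n ih => rw [PP_succ, PP_succ, ih]; ring
lemma PP_split (m c : ℕ) : PP a (m+c) = desc (a+(m:ℚ)+(c:ℚ)) (2*m) * PP (a-(m:ℚ)) c := by
  rw [PP_eq_desc, PP_eq_desc, show 2*(m+c)+1 = 2*m + (2*c+1) from by ring, desc_add]
  rw [show a + ((m+c:ℕ):ℚ) = a + (m:ℚ) + (c:ℚ) from by push_cast; ring,
      show a + (m:ℚ) + (c:ℚ) - ((2*m:ℕ):ℚ) = a - (m:ℚ) + (c:ℚ) from by push_cast; ring]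
end basics

lemma PP_chain (y : ℚ) (c d : ℕ) :
    PP y c * ∏ i ∈ Icc (c+1) (c+d), (y^2 - (i:ℚ)^2) = PP y (c+d) := by
  induction d with
  | zero => simp
  | succ n ih =>
    rw [show c+(n+1) = (c+n)+1 from rfl, prod_Icc_succ_top (by omega), ← mul_assoc, ih, PP_succ]
    push_cast; ring

lemma PP_pratio (y : ℚ) (u s m : ℕ) (hsm : s ≤ m) :
    PP y (u+s) * Pratio y u (s+1) m = PP y (u+m) := by
  have e : Pratio y u (s+1) m = ∏ i ∈ Icc (u+(s+1)) (u+m), (y^2 - (i:ℚ)^2) := by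
    rw [← Finset.map_add_left_Icc, Finset.prod_map]
    simp [Pratio, addLeftEmbedding]
  have h := PP_chain y (u+s) (m-s)
  rw [show u+s+(m-s) = u+m from by omega, show (u+s)+1 = u+(s+1) from by omega] at h
  rw [e, h]

lemma asc_decomp (α : ℚ) (m s : ℕ) (hs : s ≤ m) :
    asc α (2*m+1)
      = asc α s * desc (α+(m:ℚ)+(s:ℚ)) (m+1) * asc (α+(m:ℚ)+(s:ℚ)+1) (m-s) := by
  have h : 2*m+1 = s + ((m+1) + (m-s)) := by omega
  rw [h, asc_add, asc_add, desc_eq_asc]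
  have h1 : (((m:ℕ)+1:ℕ):ℚ) = (m:ℚ)+1 := by push_cast; ring
  have h2 : ((m-s:ℕ):ℚ) = (m:ℚ)-(s:ℚ) := by
    rw [Nat.cast_sub hs]
  push_cast [Nat.cast_sub hs]
  ring_nf


def Fq (α β : ℚ) (m s : ℕ) : ℚ :=
  (-1)^s * (m.choose s : ℚ) * asc α s * asc (α+(m:ℚ)+(s:ℚ)+1) (m-s) * desc (β+(m:ℚ)+(s:ℚ)) (2*m)

def Lq (α β : ℚ) (m : ℕ) (x : ℚ) : ℚ :=
  (α-2*β-1)*x - α*(β+3*(m:ℚ)+3) + β - ((m:ℚ)+1)*(4*(m:ℚ)+1)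

def Gq (α β : ℚ) (m s : ℕ) : ℚ :=
  (-1)^s * (((m+1).choose s) : ℚ) * (s:ℚ) * asc α s * asc (α+(m:ℚ)+(s:ℚ)+1) (m+1-s)
    * desc (β+(m:ℚ)+(s:ℚ)) (2*m+1) * Lq α β m (s:ℚ)

variable (α β : ℚ) (s d : ℕ)

lemma e1 : ((s:ℚ)+(d:ℚ)+2) * Fq α β (s+1+d) s
    = (-1)^s * ((s+1+d+1).choose s : ℚ) * ((d:ℚ)+2) * asc α s
      * ((α+2*(s:ℚ)+(d:ℚ)+2) * asc (α+2*(s:ℚ)+(d:ℚ)+3) d)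
      * desc (β+2*(s:ℚ)+(d:ℚ)+1) (2*s+2*d+2) := by
  have hc : ((s+1+d).choose s : ℚ) * ((s:ℚ)+(d:ℚ)+2)
      = ((s+1+d+1).choose s : ℚ) * ((d:ℚ)+2) := by
    have h := Nat.choose_mul_succ_eq (s+1+d) s
    have h2 : s+1+d+1-s = d+2 := by omega
    rw [h2] at h
    have h3 := congrArg (Nat.cast : ℕ → ℚ) h
    push_cast at h3
    linear_combination h3
  simp only [Fq, show s+1+d-s = d+1 from by omega, show 2*(s+1+d) = 2*s+2*d+2 from by omega]
  rw [asc_succ']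
  push_cast
  linear_combination (norm := ring_nf)
    ((-1:ℚ)^s * asc α s * (α+2*(s:ℚ)+(d:ℚ)+2) * asc (α+2*(s:ℚ)+(d:ℚ)+3) d
      * desc (β+2*(s:ℚ)+(d:ℚ)+1) (2*s+2*d+2)) * hc

lemma e2 : Fq α β (s+1+d+1) s
    = (-1)^s * ((s+1+d+1).choose s : ℚ) * asc α s
      * (asc (α+2*(s:ℚ)+(d:ℚ)+3) d * (α+2*(s:ℚ)+2*(d:ℚ)+3) * (α+2*(s:ℚ)+2*(d:ℚ)+4))
      * ((β+2*(s:ℚ)+(d:ℚ)+2) * desc (β+2*(s:ℚ)+(d:ℚ)+1) (2*s+2*d+2) * (β-(d:ℚ)-1)) := by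
  simp only [Fq, show (s+1+d+1)-s = (d+1)+1 from by omega,
    show 2*(s+1+d+1) = (2*s+2*d+2+1)+1 from by ring]
  rw [asc_succ, asc_succ, desc_succ, desc_succ']
  push_cast
  ring_nf

lemma e3 : Gq α β (s+1+d) s
    = (-1)^s * ((s+1+d+1).choose s : ℚ) * (s:ℚ) * asc α s
      * ((α+2*(s:ℚ)+(d:ℚ)+2) * asc (α+2*(s:ℚ)+(d:ℚ)+3) d * (α+2*(s:ℚ)+2*(d:ℚ)+3))
      * (desc (β+2*(s:ℚ)+(d:ℚ)+1) (2*s+2*d+2) * (β-(d:ℚ)-1))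
      * Lq α β (s+1+d) (s:ℚ) := by
  simp only [Gq, show (s+1+d)+1-s = (d+1)+1 from by omega,
    show 2*(s+1+d)+1 = (2*s+2*d+2)+1 from by ring]
  rw [asc_succ, asc_succ', desc_succ]
  push_cast
  ring_nf

lemma e4 : Gq α β (s+1+d) (s+1)
    = -((-1)^s * ((s+1+d+1).choose s : ℚ) * ((d:ℚ)+2) * asc α s * (α+(s:ℚ))
      * (asc (α+2*(s:ℚ)+(d:ℚ)+3) d * (α+2*(s:ℚ)+2*(d:ℚ)+3))
      * ((β+2*(s:ℚ)+(d:ℚ)+2) * desc (β+2*(s:ℚ)+(d:ℚ)+1) (2*s+2*d+2))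
      * Lq α β (s+1+d) ((s:ℚ)+1)) := by
  have hc : ((s+1+d+1).choose (s+1) : ℚ) * ((s:ℚ)+1)
      = ((s+1+d+1).choose s : ℚ) * ((d:ℚ)+2) := by
    have h := Nat.choose_succ_right_eq (s+1+d+1) s
    have h2 : s+1+d+1-s = d+2 := by omega
    rw [h2] at h
    have h3 := congrArg (Nat.cast : ℕ → ℚ) h
    push_cast at h3
    linear_combination h3
  simp only [Gq, show (s+1+d)+1-(s+1) = d+1 from by omega,
    show 2*(s+1+d)+1 = (2*s+2*d+2)+1 from by ring, pow_succ]
  rw [asc_succ, asc_succ, desc_succ']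
  push_cast
  linear_combination (norm := ring_nf)
    (-((-1:ℚ)^s) * asc α s * (α+(s:ℚ)) * asc (α+2*(s:ℚ)+(d:ℚ)+3) d * (α+2*(s:ℚ)+2*(d:ℚ)+3)
      * (β+2*(s:ℚ)+(d:ℚ)+2) * desc (β+2*(s:ℚ)+(d:ℚ)+1) (2*s+2*d+2)
      * Lq α β (s+1+d) ((s:ℚ)+1)) * hc

lemma asc_zero' (a : ℚ) : asc a 0 = 1 := by simp [asc]
lemma asc_one' (a : ℚ) : asc a 1 = a := by simp [asc]

lemma starA : ((s:ℚ)+(d:ℚ)+2)^2*(α+2*(s:ℚ)+2*(d:ℚ)+3) *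
      (Fq α β (s+1+d+1) s
        - (2*(2*((s:ℚ)+(d:ℚ)+1)+1)*(β-α-((s:ℚ)+(d:ℚ)+1))*(β+(s:ℚ)+(d:ℚ)+2)) * Fq α β (s+1+d) s)
    = ((s:ℚ)+(d:ℚ)+2) * (Gq α β (s+1+d) (s+1) - Gq α β (s+1+d) s) := by
  rw [e2, e3, e4]
  simp only [Lq]
  push_cast
  linear_combination (norm := ring_nf)
    (-((s:ℚ)+(d:ℚ)+2)*(α+2*(s:ℚ)+2*(d:ℚ)+3)
      *(2*(2*((s:ℚ)+(d:ℚ)+1)+1)*(β-α-((s:ℚ)+(d:ℚ)+1))*(β+(s:ℚ)+(d:ℚ)+2))) * e1 α β s d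

variable (m : ℕ)

lemma b1 : Fq α β m m = (-1)^m * asc α m * desc (β+2*(m:ℚ)) (2*m) := by
  simp only [Fq, Nat.choose_self, Nat.sub_self, asc_zero']
  push_cast; ring_nf

lemma b2 : Fq α β (m+1) m
    = (-1)^m * ((m:ℚ)+1) * asc α m * (α+2*(m:ℚ)+2)
      * ((β+2*(m:ℚ)+1) * desc (β+2*(m:ℚ)) (2*m) * β) := by
  simp only [Fq, show m+1-m = 1 from by omega, show 2*(m+1) = ((2*m)+1)+1 from by ring,
    Nat.choose_succ_self_right, asc_one']
  rw [desc_succ, desc_succ']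
  push_cast; ring_nf

lemma b3 : Gq α β m m
    = (-1)^m * ((m:ℚ)+1) * (m:ℚ) * asc α m * (α+2*(m:ℚ)+1)
      * (desc (β+2*(m:ℚ)) (2*m) * β) * Lq α β m (m:ℚ) := by
  simp only [Gq, show m+1-m = 1 from by omega, Nat.choose_succ_self_right, asc_one',
    show 2*m+1 = (2*m)+1 from rfl]
  rw [desc_succ]
  push_cast; ring_nf

lemma b4 : Gq α β m (m+1)
    = -((-1)^m * ((m:ℚ)+1) * asc α m * (α+(m:ℚ))
      * ((β+2*(m:ℚ)+1) * desc (β+2*(m:ℚ)) (2*m)) * Lq α β m ((m:ℚ)+1)) := by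
  simp only [Gq, Nat.choose_self, show m+1-(m+1) = 0 from by omega, asc_zero', pow_succ,
    show 2*m+1 = (2*m)+1 from rfl]
  rw [asc_succ, desc_succ']
  push_cast; ring_nf

lemma c2 : Fq α β (m+1) (m+1)
    = (-1)^(m+1) * asc α (m+1)
      * ((β+2*(m:ℚ)+2) * (β+2*(m:ℚ)+1) * desc (β+2*(m:ℚ)) (2*m)) := by
  simp only [Fq, Nat.choose_self, Nat.sub_self, asc_zero',
    show 2*(m+1) = (((2*m)+1)+1) from by ring]
  rw [desc_succ', desc_succ']
  push_cast; ring_nf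

lemma Fq_top : Fq α β m (m+1) = 0 := by
  simp [Fq, Nat.choose_succ_self]

lemma Gq_top : Gq α β m (m+2) = 0 := by
  simp [Gq, Nat.choose_succ_self]

lemma Gq_bot : Gq α β m 0 = 0 := by
  simp [Gq]

lemma star (s : ℕ) :
    ((m:ℚ)+1)^2*(α+2*(m:ℚ)+1) *
      (Fq α β (m+1) s - (2*(2*(m:ℚ)+1)*(β-α-(m:ℚ))*(β+(m:ℚ)+1)) * Fq α β m s)
    = ((m:ℚ)+1) * (Gq α β m (s+1) - Gq α β m s) := by
  rcases lt_trichotomy s m with h | rfl | h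
  · obtain ⟨d, rfl⟩ : ∃ d, m = s+1+d := ⟨m-s-1, by omega⟩
    have h0 := starA α β s d
    push_cast at h0 ⊢
    linear_combination h0
  · rw [b2, b1, b4, b3]
    simp only [Lq]
    push_cast; ring
  · rcases Nat.lt_or_ge s (m+2) with h2 | h2
    · obtain rfl : s = m+1 := by omega
      rw [c2, Fq_top, Gq_top, b4, asc_succ]
      simp only [Lq]
      push_cast; ring
    · -- s ≥ m+2 : all terms vanish
      have h3 : Fq α β (m+1) s = 0 := by
        simp [Fq, Nat.choose_eq_zero_of_lt (by omega : m+1 < s)]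
      have h4 : Fq α β m s = 0 := by
        simp [Fq, Nat.choose_eq_zero_of_lt (by omega : m < s)]
      have h5 : Gq α β m (s+1) = 0 := by
        simp [Gq, Nat.choose_eq_zero_of_lt (by omega : m+1 < s+1)]
      have h6 : Gq α β m s = 0 := by
        simp [Gq, Nat.choose_eq_zero_of_lt (by omega : m+1 < s)]
      rw [h3, h4, h5, h6]; ring

def Sq (α β : ℚ) (m : ℕ) : ℚ := ∑ s ∈ range (m+1), Fq α β m s

lemma Sq_rec (hα : α+2*(m:ℚ)+1 ≠ 0) :
    Sq α β (m+1) = 2*(2*(m:ℚ)+1)*(β-α-(m:ℚ))*(β+(m:ℚ)+1) * Sq α β m := by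
  set c : ℚ := 2*(2*(m:ℚ)+1)*(β-α-(m:ℚ))*(β+(m:ℚ)+1) with hc
  have hsum : ∑ s ∈ range (m+2),
        (((m:ℚ)+1)^2*(α+2*(m:ℚ)+1) * (Fq α β (m+1) s - c * Fq α β m s))
      = ∑ s ∈ range (m+2), (((m:ℚ)+1) * (Gq α β m (s+1) - Gq α β m s)) :=
    sum_congr rfl fun s _ => star α β m s
  have h1 : ∑ s ∈ range (m+2), Fq α β m s = Sq α β m := by
    rw [show m+2 = (m+1)+1 from rfl, sum_range_succ, Fq_top]
    simp [Sq]
  have h2 : ∑ s ∈ range (m+2), Fq α β (m+1) s = Sq α β (m+1) := rfl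
  have hL : ∑ s ∈ range (m+2),
        (((m:ℚ)+1)^2*(α+2*(m:ℚ)+1) * (Fq α β (m+1) s - c * Fq α β m s))
      = ((m:ℚ)+1)^2*(α+2*(m:ℚ)+1) * (Sq α β (m+1) - c * Sq α β m) := by
    rw [← mul_sum, sum_sub_distrib, ← mul_sum, h1, h2]
  have hR : ∑ s ∈ range (m+2), (((m:ℚ)+1) * (Gq α β m (s+1) - Gq α β m s)) = 0 := by
    rw [← mul_sum, sum_range_sub (fun i => Gq α β m i), Gq_top, Gq_bot]
    ring
  rw [hL, hR] at hsum
  have hne : ((m:ℚ)+1)^2*(α+2*(m:ℚ)+1) ≠ 0 :=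
    mul_ne_zero (pow_ne_zero _ (by positivity)) hα
  have := mul_eq_zero.mp hsum
  rcases this with h | h
  · exact absurd h hne
  · linarith [sub_eq_zero.mp h]

lemma Sq_closed (hα : 0 < α) :
    (m.factorial : ℚ) * Sq α β m
      = (((2*m).factorial : ℕ) : ℚ) * desc (β-α) m * asc (β+1) m := by
  induction m with
  | zero => simp [Sq, Fq, asc, desc]
  | succ n ih =>
    have hne : α+2*(n:ℚ)+1 ≠ 0 := by positivity
    rw [Sq_rec α β n hne, show 2*(n+1) = ((2*n)+1)+1 from by ring,
      Nat.factorial_succ ((2*n)+1), Nat.factorial_succ (2*n), Nat.factorial_succ n,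
      desc_succ, asc_succ]
    push_cast
    linear_combination (((n:ℚ)+1)*(2*(2*(n:ℚ)+1)*(β-α-(n:ℚ))*(β+(n:ℚ)+1))) * ih


/-- closed-form evaluation of h_{1,m,u} at (-k-1/2, -m+k+1/2). -/
theorem statement18 (m u : ℕ) (hu : 1 ≤ u) (k : ℚ)
    (hP : ∀ s ≤ m, PP (-(m:ℚ) + k + 1/2) (u + s) ≠ 0) :
    h1 m u (-k - 1/2) (-(m:ℚ) + k + 1/2) =
      -PP (-(m:ℚ) + k + 1/2) (u + m) * ((m:ℚ)+1) * ((2*m).factorial : ℚ)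
        * desc k m * asc ((u:ℚ) + k + 3/2) m / asc ((u:ℚ) + 1/2) (2*m+1) := by
  have hαpos : (0:ℚ) < (u:ℚ)+1/2 := by positivity
  have hascne : asc ((u:ℚ)+1/2) (2*m+1) ≠ 0 := ne_of_gt (asc_pos _ _ hαpos)
  rw [eq_div_iff hascne]
  simp only [h1, Algebra.algebraMap_self, RingHom.id_apply]
  rw [sum_mul]
  have hfacne : (((m+1).factorial : ℕ) : ℚ) ≠ 0 :=
    Nat.cast_ne_zero.mpr (Nat.factorial_ne_zero _)
  have hterm : ∀ s ∈ range (m+1),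
      (-1)^s * (m.choose s : ℚ) / gchoose ((m : ℚ) + u + s + 1/2) (m+1)
          * PP (-k - 1/2) (m + u + s) * Pratio (-(m:ℚ) + k + 1/2) u (s+1) m
          * asc ((u:ℚ)+1/2) (2*m+1)
        = -PP (-(m:ℚ) + k + 1/2) (u+m)
            * ((((m+1).factorial : ℕ) : ℚ) * Fq ((u:ℚ)+1/2) (k+(u:ℚ)+1/2) m s) := by
    intro s hs
    have hsm : s ≤ m := Nat.lt_succ_iff.mp (mem_range.mp hs)
    have hD : desc (((u:ℚ)+1/2)+(m:ℚ)+(s:ℚ)) (m+1) ≠ 0 := by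
      refine ne_of_gt (desc_pos _ _ ?_)
      have : ((u:ℚ)+1/2)+(m:ℚ)+(s:ℚ) - ((m+1:ℕ):ℚ) + 1 = (u:ℚ)+1/2+(s:ℚ) := by
        push_cast; ring
      rw [this]; positivity
    have hgch : gchoose ((m : ℚ) + u + s + 1/2) (m+1)
        = desc (((u:ℚ)+1/2)+(m:ℚ)+(s:ℚ)) (m+1) / (((m+1).factorial : ℕ) : ℚ) := by
      rw [show (m : ℚ) + u + s + 1/2 = ((u:ℚ)+1/2)+(m:ℚ)+(s:ℚ) from by ring]
      rfl
    have hx : PP (-k - 1/2) (m + u + s)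
        = -(desc ((k+(u:ℚ)+1/2)+(m:ℚ)+(s:ℚ)) (2*m) * PP (-(m:ℚ) + k + 1/2) (u+s)) := by
      rw [show (-k - 1/2 : ℚ) = -(k+1/2) from by ring, show m+u+s = m+(u+s) from by omega,
        PP_neg, PP_split,
        show (k+1/2)+(m:ℚ)+((u+s:ℕ):ℚ) = (k+(u:ℚ)+1/2)+(m:ℚ)+(s:ℚ) from by push_cast; ring,
        show (k+1/2)-(m:ℚ) = -(m:ℚ)+k+1/2 from by ring]
    rw [hx, hgch, asc_decomp ((u:ℚ)+1/2) m s hsm, Fq, div_div_eq_mul_div,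
        div_mul_eq_mul_div, div_mul_eq_mul_div, div_mul_eq_mul_div, div_eq_iff hD,
        ← PP_pratio (-(m:ℚ)+k+1/2) u s m hsm]
    ring
  rw [sum_congr rfl hterm, ← mul_sum, ← mul_sum]
  have hclosed := Sq_closed ((u:ℚ)+1/2) (k+(u:ℚ)+1/2) m hαpos
  simp only [Sq] at hclosed
  rw [show (k+(u:ℚ)+1/2) - ((u:ℚ)+1/2) = k from by ring,
      show (k+(u:ℚ)+1/2) + 1 = (u:ℚ)+k+3/2 from by ring] at hclosed
  have hfs : (((m+1).factorial : ℕ) : ℚ) = ((m:ℚ)+1) * ((m.factorial : ℕ) : ℚ) := by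
    rw [Nat.factorial_succ]; push_cast; ring
  rw [hfs]
  linear_combination (-PP (-(m:ℚ) + k + 1/2) (u+m) * ((m:ℚ)+1)) * hclosed
end
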